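/- arXiv:2006.05636 — 2 statements merged into one kernel-verified Lean document; each statement's English description precedes it below -/
import Mathlib

section
/- Let X be an Archimedean pre-Riesz space (equivalently in this setting, a directed Archimedean ordered vector space) with order unit, and let i : X → C(Ω) be a bipositive linear embedding onto an order dense, majorizing subspace of C(Ω), with Ω a compact Hausdorff space. Then for every positive linear functional φ : X → ℝ there exists a regular Borel measure μ on Ω such that φ(x) = ∫_Ω i(x)(ω) dμ(ω) for all x ∈ X. -/
open MeasureTheory Set TopologicalSpace
open scoped ENNReal NNReal

noncomputable section RMKaux

namespace RMKaux

variable {Ω : Type*} [TopologicalSpace Ω] [CompactSpace Ω] [T2Space Ω]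

/-- Admissible functions for a set `K`: nonnegative continuous functions that are `≥ 1` on `K`. -/
def Adm (K : Set Ω) : Set C(Ω, ℝ) := {f | (∀ x, 0 ≤ f x) ∧ ∀ x ∈ K, 1 ≤ f x}

variable (Λ : C(Ω, ℝ) →ₗ[ℝ] ℝ)

/-- The `inf` defining the Riesz content. -/
def ell (K : Set Ω) : ℝ := sInf (Λ '' Adm K)

variable {Λ}

lemma one_mem_Adm (K : Set Ω) : (1 : C(Ω, ℝ)) ∈ Adm K :=
  ⟨fun _ => zero_le_one, fun _ _ => le_refl _⟩

lemma image_nonempty (K : Set Ω) : (Λ '' Adm K).Nonempty :=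
  ⟨Λ 1, ⟨1, one_mem_Adm K, rfl⟩⟩

section posΛ

variable (hΛ : ∀ f : C(Ω, ℝ), (∀ x, 0 ≤ f x) → 0 ≤ Λ f)
include hΛ

lemma hmono {f g : C(Ω, ℝ)} (h : ∀ x, f x ≤ g x) : Λ f ≤ Λ g := by
  have := hΛ (g - f) (fun x => by simpa using sub_nonneg.2 (h x))
  have h2 : Λ (g - f) = Λ g - Λ f := map_sub Λ g f
  linarith [h2 ▸ this]

lemma bddBelow_image (K : Set Ω) : BddBelow (Λ '' Adm K) := by
  refine ⟨0, fun r hr => ?_⟩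
  obtain ⟨f, hf, rfl⟩ := hr
  exact hΛ f hf.1

lemma ell_nonneg (K : Set Ω) : 0 ≤ ell Λ K :=
  le_csInf (image_nonempty K) (fun r hr => by
    obtain ⟨f, hf, rfl⟩ := hr; exact hΛ f hf.1)

lemma ell_le {K : Set Ω} {f : C(Ω, ℝ)} (hf : f ∈ Adm K) : ell Λ K ≤ Λ f :=
  csInf_le (bddBelow_image hΛ K) ⟨f, hf, rfl⟩

lemma le_ell {K : Set Ω} {g : C(Ω, ℝ)} (hg0 : ∀ x, 0 ≤ g x) (hg1 : ∀ x, g x ≤ 1)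
    (hsupp : ∀ x, g x ≠ 0 → x ∈ K) : Λ g ≤ ell Λ K := by
  refine le_csInf (image_nonempty K) (fun r hr => ?_)
  obtain ⟨f, hf, rfl⟩ := hr
  refine hmono hΛ (fun x => ?_)
  by_cases hx : g x = 0
  · rw [hx]; exact hf.1 x
  · exact (hg1 x).trans (hf.2 x (hsupp x hx))

lemma ell_mono {K K' : Set Ω} (h : K ⊆ K') : ell Λ K ≤ ell Λ K' := by
  refine csInf_le_csInf (bddBelow_image hΛ K) (image_nonempty K') ?_
  rintro r ⟨f, hf, rfl⟩
  exact ⟨f, ⟨hf.1, fun x hx => hf.2 x (h hx)⟩, rfl⟩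

lemma ell_union_le (K₁ K₂ : Set Ω) : ell Λ (K₁ ∪ K₂) ≤ ell Λ K₁ + ell Λ K₂ := by
  rw [← sub_le_iff_le_add]
  refine le_csInf (image_nonempty K₁) ?_
  rintro r ⟨f₁, hf₁, rfl⟩
  rw [sub_le_iff_le_add, add_comm, ← sub_le_iff_le_add]
  refine le_csInf (image_nonempty K₂) ?_
  rintro r ⟨f₂, hf₂, rfl⟩
  rw [sub_le_iff_le_add]
  have : ell Λ (K₁ ∪ K₂) ≤ Λ (f₁ + f₂) := by
    refine ell_le hΛ ⟨fun x => add_nonneg (hf₁.1 x) (hf₂.1 x), fun x hx => ?_⟩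
    rcases hx with hx | hx
    · calc (1:ℝ) ≤ f₁ x := hf₁.2 x hx
        _ ≤ f₁ x + f₂ x := le_add_of_nonneg_right (hf₂.1 x)
        _ = (f₁ + f₂) x := rfl
    · calc (1:ℝ) ≤ f₂ x := hf₂.2 x hx
        _ ≤ f₁ x + f₂ x := le_add_of_nonneg_left (hf₁.1 x)
        _ = (f₁ + f₂) x := rfl
  calc ell Λ (K₁ ∪ K₂) ≤ Λ (f₁ + f₂) := this
    _ = Λ f₂ + Λ f₁ := by rw [map_add]; ring

lemma le_ell_union {K₁ K₂ : Set Ω} (h₁ : IsClosed K₁) (h₂ : IsClosed K₂)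
    (hd : Disjoint K₁ K₂) : ell Λ K₁ + ell Λ K₂ ≤ ell Λ (K₁ ∪ K₂) := by
  obtain ⟨g, hg1, hg2, hg01⟩ := exists_continuous_zero_one_of_isClosed h₂ h₁ hd.symm
  refine le_csInf (image_nonempty (K₁ ∪ K₂)) ?_
  rintro r ⟨f, hf, rfl⟩
  have hfg₁ : ell Λ K₁ ≤ Λ (f * g) := by
    refine ell_le hΛ ⟨fun x => mul_nonneg (hf.1 x) (hg01 x).1, fun x hx => ?_⟩
    have : g x = 1 := hg2 hx
    calc (1:ℝ) ≤ f x := hf.2 x (Or.inl hx)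
      _ = f x * g x := by rw [this, mul_one]
      _ = (f * g) x := rfl
  have hfg₂ : ell Λ K₂ ≤ Λ (f * (1 - g)) := by
    refine ell_le hΛ ⟨fun x => mul_nonneg (hf.1 x) (by simpa using (hg01 x).2), fun x hx => ?_⟩
    have : g x = 0 := hg1 hx
    calc (1:ℝ) ≤ f x := hf.2 x (Or.inr hx)
      _ = f x * (1 - g x) := by rw [this]; ring
      _ = (f * (1 - g)) x := by simp
  have : Λ (f * g) + Λ (f * (1 - g)) = Λ f := by
    rw [← map_add]; congr 1; ext x; simp; ring
  linarith

/-- The Riesz content associated with a positive linear functional. -/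
def rieszContent : Content Ω where
  toFun K := Real.toNNReal (ell Λ K)
  mono' K₁ K₂ h := Real.toNNReal_le_toNNReal (ell_mono hΛ h)
  sup_disjoint' K₁ K₂ hd _ _ := by
    have hle := le_ell_union (Λ := Λ) hΛ K₁.2.isClosed K₂.2.isClosed hd
    have hge := ell_union_le (Λ := Λ) (hΛ := hΛ) (K₁ : Set Ω) K₂
    have h2 : ell Λ ((K₁ : Set Ω) ∪ K₂) = ell Λ K₁ + ell Λ K₂ := le_antisymm hge hle
    show (ell Λ ((K₁ : Set Ω) ∪ K₂)).toNNReal = _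
    rw [h2, Real.toNNReal_add (ell_nonneg hΛ _) (ell_nonneg hΛ _)]
  sup_le' K₁ K₂ := by
    have hge := ell_union_le (Λ := Λ) (hΛ := hΛ) (K₁ : Set Ω) K₂
    calc Real.toNNReal (ell Λ ((K₁ ⊔ K₂ : Compacts Ω) : Set Ω))
        ≤ Real.toNNReal (ell Λ K₁ + ell Λ K₂) := Real.toNNReal_le_toNNReal hge
      _ ≤ Real.toNNReal (ell Λ K₁) + Real.toNNReal (ell Λ K₂) := Real.toNNReal_add_le

lemma contentRegular_rieszContent : (rieszContent hΛ).ContentRegular := by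
  intro K
  refine le_antisymm (le_iInf fun K' => le_iInf fun hK' => ?_) ?_
  · exact ENNReal.coe_le_coe.2
      (Real.toNNReal_le_toNNReal (ell_mono hΛ (hK'.trans interior_subset)))
  · refine ENNReal.le_of_forall_pos_le_add fun ε hε _ => ?_
    set t := ell Λ (K : Set Ω) with ht
    have ht0 : 0 ≤ t := ell_nonneg hΛ _
    have hε' : (0:ℝ) < ε := hε
    obtain ⟨r, ⟨f, hf, rfl⟩, hr⟩ : ∃ r ∈ Λ '' Adm (K : Set Ω), r < t + ε/2 :=
      exists_lt_of_csInf_lt (image_nonempty _) (by have h : sInf (⇑Λ '' Adm (K:Set Ω)) = t := rfl; rw [h]; linarith)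
    have htε : 0 < t + ε/2 := by linarith
    set δ : ℝ := min (1/2) (ε/(4*(t+ε/2))) with hδdef
    have hδ0 : 0 < δ := lt_min (by norm_num) (by positivity)
    have hδhalf : δ ≤ 1/2 := min_le_left _ _
    have h1δ : 0 < 1 - δ := by linarith
    set K' : Set Ω := f ⁻¹' (Ici (1-δ)) with hK'def
    have hK'c : IsCompact K' := (isClosed_Ici.preimage f.continuous).isCompact
    have hKint : (K : Set Ω) ⊆ interior K' := by
      have hopen : IsOpen (f ⁻¹' (Ioi (1-δ))) := isOpen_Ioi.preimage f.continuous
      have hsub : f ⁻¹' (Ioi (1-δ)) ⊆ K' := preimage_mono Ioi_subset_Ici_self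
      refine fun x hx => interior_maximal hsub hopen ?_
      have := hf.2 x hx
      simp only [mem_preimage, mem_Ioi]
      linarith
    have hℓK' : ell Λ K' ≤ (1-δ)⁻¹ * Λ f := by
      have hadm : ((1-δ)⁻¹ • f) ∈ Adm K' := by
        constructor
        · intro x; exact mul_nonneg (by positivity) (hf.1 x)
        · intro x hx
          have hfx : 1 - δ ≤ f x := hx
          calc (1:ℝ) = (1-δ)⁻¹ * (1-δ) := by field_simp
            _ ≤ (1-δ)⁻¹ * f x := mul_le_mul_of_nonneg_left hfx (by positivity)
            _ = ((1-δ)⁻¹ • f) x := rfl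
      calc ell Λ K' ≤ Λ ((1-δ)⁻¹ • f) := ell_le hΛ hadm
        _ = (1-δ)⁻¹ * Λ f := by rw [Λ.map_smul]; rfl
    have hΛf0 : 0 ≤ Λ f := hΛ f hf.1
    have hnum : (1-δ)⁻¹ * Λ f ≤ t + ε := by
      have hinv : (1-δ)⁻¹ ≤ 1 + 2*δ := by
        have h : 1 ≤ (1+2*δ)*(1-δ) := by nlinarith
        calc (1-δ)⁻¹ = 1 * (1-δ)⁻¹ := (one_mul _).symm
          _ ≤ ((1+2*δ)*(1-δ)) * (1-δ)⁻¹ := by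
              apply mul_le_mul_of_nonneg_right h (by positivity)
          _ = 1+2*δ := by field_simp
      have hδle : δ ≤ ε/(4*(t+ε/2)) := min_le_right _ _
      have h2 : 2*δ*(t+ε/2) ≤ ε/2 := by
        calc 2*δ*(t+ε/2) ≤ 2*(ε/(4*(t+ε/2)))*(t+ε/2) := by nlinarith
          _ = ε/2 := by field_simp; ring
      calc (1-δ)⁻¹ * Λ f ≤ (1+2*δ) * (t+ε/2) :=
            mul_le_mul hinv (le_of_lt hr) hΛf0 (by positivity)
        _ = (t+ε/2) + 2*δ*(t+ε/2) := by ring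
        _ ≤ t + ε := by linarith
    refine iInf_le_of_le ⟨K', hK'c⟩ (iInf_le_of_le hKint ?_)
    show (rieszContent hΛ) (⟨K', hK'c⟩ : Compacts Ω) ≤ (rieszContent hΛ) K + (ε : ℝ≥0∞)
    calc (rieszContent hΛ) (⟨K', hK'c⟩ : Compacts Ω) = ENNReal.ofReal (ell Λ K') := rfl
      _ ≤ ENNReal.ofReal (t + ε) := ENNReal.ofReal_le_ofReal (hℓK'.trans hnum)
      _ = ENNReal.ofReal t + ENNReal.ofReal (ε:ℝ) := ENNReal.ofReal_add ht0 ε.2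
      _ = (rieszContent hΛ) K + (ε : ℝ≥0∞) := by
          rw [ENNReal.ofReal_coe_nnreal]; rfl

section meas

variable [MeasurableSpace Ω] [BorelSpace Ω]

lemma measure_univ_eq :
    (rieszContent hΛ).measure univ = ENNReal.ofReal (ell Λ (univ : Set Ω)) := by
  have h := Content.measure_eq_content_of_regular (rieszContent hΛ)
    (contentRegular_rieszContent hΛ) ⟨univ, isCompact_univ⟩
  exact h

lemma isFiniteMeasure_riesz : IsFiniteMeasure (rieszContent hΛ).measure := by
  constructor
  rw [measure_univ_eq hΛ]
  exact ENNReal.ofReal_lt_top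

lemma measure_univ_toReal_le : (((rieszContent hΛ).measure) univ).toReal ≤ Λ 1 := by
  rw [measure_univ_eq hΛ, ENNReal.toReal_ofReal (ell_nonneg hΛ _)]
  exact ell_le hΛ (one_mem_Adm _)

lemma Λg_le_measure {V : Set Ω} (hV : IsOpen V) {g : C(Ω, ℝ)}
    (hg0 : ∀ x, 0 ≤ g x) (hg1 : ∀ x, g x ≤ 1) (hsupp : tsupport ⇑g ⊆ V) :
    Λ g ≤ (((rieszContent hΛ).measure) V).toReal := by
  have h1 : Λ g ≤ ell Λ (tsupport ⇑g) :=
    le_ell hΛ hg0 hg1 (fun x hx => subset_closure (Function.mem_support.2 hx))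
  have hK : IsCompact (tsupport ⇑g) := (isClosed_tsupport ⇑g).isCompact
  have h2 : ENNReal.ofReal (ell Λ (tsupport ⇑g)) ≤ (rieszContent hΛ).measure V := by
    rw [Content.measure_apply _ hV.measurableSet]
    calc ENNReal.ofReal (ell Λ (tsupport ⇑g))
        = (rieszContent hΛ) ⟨tsupport ⇑g, hK⟩ := rfl
      _ ≤ (rieszContent hΛ).innerContent ⟨V, hV⟩ :=
          (rieszContent hΛ).le_innerContent ⟨tsupport ⇑g, hK⟩ ⟨V, hV⟩ hsupp
      _ = (rieszContent hΛ).outerMeasure V :=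
          ((rieszContent hΛ).outerMeasure_opens ⟨V, hV⟩).symm
  have hfin : (rieszContent hΛ).measure V ≠ ⊤ := by
    have := isFiniteMeasure_riesz hΛ
    exact measure_ne_top _ V
  calc Λ g = (ENNReal.ofReal (Λ g)).toReal := (ENNReal.toReal_ofReal (hΛ g hg0)).symm
    _ ≤ (((rieszContent hΛ).measure) V).toReal :=
        ENNReal.toReal_mono hfin (le_trans (ENNReal.ofReal_le_ofReal h1) h2)

set_option maxHeartbeats 1000000 in
lemma Λ_le_integral (f : C(Ω, ℝ)) :
    Λ f ≤ ∫ x, f x ∂((rieszContent hΛ).measure) := by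
  set μ := (rieszContent hΛ).measure with hμdef
  have hfinμ : IsFiniteMeasure μ := isFiniteMeasure_riesz hΛ
  have hintf : ∀ g : C(Ω, ℝ), Integrable (⇑g) μ := fun g =>
    g.continuous.integrable_of_hasCompactSupport ((isClosed_tsupport _).isCompact)
  have key : ∀ ε : ℝ, 0 < ε → ε ≤ 1 →
      Λ f ≤ (∫ x, f x ∂μ) + ε * (2*(μ univ).toReal + 2*‖f‖ + 4) := by
    intro ε hε hε1
    set B : ℝ := ‖f‖ with hB
    have hB0 : 0 ≤ B := norm_nonneg f
    have hfB : ∀ x, -B - 1 < f x ∧ f x ≤ B := by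
      intro x
      have h := f.norm_coe_le_norm x
      rw [Real.norm_eq_abs] at h
      obtain ⟨h1, h2⟩ := abs_le.1 h
      exact ⟨by linarith, h2⟩
    set a : ℝ := -B - 1 with ha
    set n : ℕ := ⌈(2*B+1)/ε⌉₊ + 1 with hn
    have hn0 : 0 < n := Nat.succ_pos _
    have hn0' : (0:ℝ) < n := by exact_mod_cast hn0
    have hnε : (2*B+1) ≤ n * ε := by
      have h1 : (2*B+1)/ε ≤ (⌈(2*B+1)/ε⌉₊ : ℝ) := Nat.le_ceil _
      have h2 : (⌈(2*B+1)/ε⌉₊ : ℝ) ≤ n := by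
        exact_mod_cast Nat.le_succ ⌈(2*B+1)/ε⌉₊
      calc 2*B+1 = ((2*B+1)/ε) * ε := by field_simp
        _ ≤ n * ε := mul_le_mul_of_nonneg_right (h1.trans h2) hε.le

    have hnε' : (n:ℝ) * ε ≤ 2*B+1+2*ε := by
      have h1 : (⌈(2*B+1)/ε⌉₊:ℝ) < (2*B+1)/ε + 1 := Nat.ceil_lt_add_one (by positivity)
      have h2 : (n:ℝ) ≤ (2*B+1)/ε + 2 := by
        rw [hn]; push_cast; linarith
      calc (n:ℝ)*ε ≤ ((2*B+1)/ε + 2)*ε := mul_le_mul_of_nonneg_right h2 hε.le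
        _ = 2*B+1+2*ε := by field_simp
    set E : Fin n → Set Ω := fun i => ⇑f ⁻¹' (Ioc (a + (i:ℕ)*ε) (a + ((i:ℕ)+1)*ε)) with hE
    have hEm : ∀ i, MeasurableSet (E i) := fun i =>
      measurableSet_Ioc.preimage f.continuous.measurable
    have hEd : Pairwise (Function.onFun Disjoint E) := by
      have key2 : ∀ i j : Fin n, i < j → Disjoint (E i) (E j) := by
        intro i j hij
        rw [Set.disjoint_left]
        rintro x hxi hxj
        have h1 : f x ≤ a + ((i:ℕ)+1)*ε := hxi.2
        have h2 : a + (j:ℕ)*ε < f x := hxj.1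
        have hij' : ((i:ℕ):ℝ) + 1 ≤ ((j:ℕ):ℝ) := by
          have : (i:ℕ) + 1 ≤ (j:ℕ) := hij
          exact_mod_cast this
        nlinarith
      intro i j hij
      rcases lt_or_gt_of_ne hij with h | h
      · exact key2 i j h
      · exact (key2 j i h).symm
    have hEU : ⋃ i, E i = univ := by
      refine eq_univ_of_forall (fun x => ?_)
      have hax : a < f x := (hfB x).1
      have hfx : f x ≤ B := (hfB x).2
      have ht0 : 0 < f x - a := by linarith
      set k : ℕ := ⌈(f x - a)/ε⌉₊ with hk
      have hk1 : 1 ≤ k := by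
        rw [hk]; exact Nat.one_le_ceil_iff.2 (by positivity)
      have hkn : k ≤ n := by
        rw [hk]
        apply Nat.ceil_le.2
        rw [div_le_iff₀ hε]
        have h3 : f x - a ≤ 2*B+1 := by rw [ha]; linarith
        linarith [hnε]
      have hklt : k - 1 < n := by omega
      refine mem_iUnion.2 ⟨⟨k-1, hklt⟩, ?_⟩
      have hc : ((k-1:ℕ):ℝ) = (k:ℝ) - 1 := by
        rw [Nat.cast_sub hk1]; norm_num
      have hcoe : (((⟨k-1, hklt⟩ : Fin n):ℕ):ℝ) = (k:ℝ) - 1 := by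
        simp only [Fin.val_mk]; exact hc
      constructor
      · show a + (((⟨k-1, hklt⟩ : Fin n):ℕ):ℝ)*ε < f x
        rw [hcoe]
        have h1 : ((k-1:ℕ):ℝ) < (f x - a)/ε := by
          apply Nat.lt_ceil.1; rw [← hk]; omega
        rw [hc] at h1
        have := (lt_div_iff₀ hε).1 h1
        linarith
      · show f x ≤ a + ((((⟨k-1, hklt⟩ : Fin n):ℕ):ℝ)+1)*ε
        rw [hcoe]
        have h1 : (f x - a)/ε ≤ (k:ℝ) := by rw [hk]; exact Nat.le_ceil _
        have := (div_le_iff₀ hε).1 h1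
        have heq : ((k:ℝ) - 1 + 1) = (k:ℝ) := by ring
        rw [heq]
        linarith
    have hVex : ∀ i : Fin n, ∃ V : Set Ω, IsOpen V ∧ E i ⊆ V ∧
        μ V ≤ μ (E i) + ENNReal.ofReal (ε/n) ∧ ∀ x ∈ V, f x < a + ((i:ℕ)+1)*ε + ε := by
      intro i
      obtain ⟨U, hEU', hUo, hU⟩ := Set.exists_isOpen_lt_add (ε := ENNReal.ofReal (ε/n))
        (E i) (measure_ne_top μ _)
        (by rw [Ne, ENNReal.ofReal_eq_zero]; push_neg; positivity)
      refine ⟨U ∩ ⇑f ⁻¹' (Iio (a + ((i:ℕ)+1)*ε + ε)),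
        hUo.inter (isOpen_Iio.preimage f.continuous),
        fun x hx => ⟨hEU' hx, ?_⟩, ?_, fun x hx => hx.2⟩
      · have h2 : f x ≤ a + ((i:ℕ)+1)*ε := hx.2
        show f x < a + ((i:ℕ)+1)*ε + ε
        linarith
      · exact le_trans (measure_mono inter_subset_left) hU.le
    choose V hVo hEV hμV hfV using hVex
    have hcover : (univ : Set Ω) ⊆ ⋃ i, V i := by
      rw [← hEU]; exact iUnion_mono (fun i => hEV i)
    obtain ⟨p, hp⟩ := PartitionOfUnity.exists_isSubordinate_of_locallyFinite isClosed_univ V hVo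
      (locallyFinite_of_finite V) hcover
    have hsum1 : ∀ x : Ω, ∑ i : Fin n, p i x = 1 := by
      intro x
      have h := p.sum_eq_one (mem_univ x)
      rwa [finsum_eq_sum_of_fintype] at h
    have hΛdecomp : Λ f = ∑ i : Fin n, Λ (p i * f) := by
      have hfe : f = ∑ i : Fin n, p i * f := by
        ext x
        simp only [ContinuousMap.coe_sum, Finset.sum_apply, ContinuousMap.mul_apply]
        rw [← Finset.sum_mul, hsum1 x, one_mul]
      conv_lhs => rw [hfe]
      rw [map_sum]
    set c : Fin n → ℝ := fun i => ((i:ℕ):ℝ)*ε + 2*ε with hcdef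
    have hc0 : ∀ i, 0 ≤ c i := fun i => by
      have : (0:ℝ) ≤ ((i:ℕ):ℝ) := Nat.cast_nonneg _
      rw [hcdef]; dsimp only; nlinarith
    have hca : ∀ i : Fin n, a + ((i:ℕ)+1)*ε + ε = c i - (B+1) := by
      intro i; rw [hcdef]; dsimp only; rw [ha]; ring
    have step1 : ∀ i, Λ (p i * f) ≤ (a + ((i:ℕ)+1)*ε + ε) * Λ (p i) := by
      intro i
      have hpt : ∀ x, (p i * f) x ≤ ((a + ((i:ℕ)+1)*ε + ε) • (p i : C(Ω,ℝ))) x := by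
        intro x
        show p i x * f x ≤ (a + ((i:ℕ)+1)*ε + ε) * p i x
        by_cases hx : p i x = 0
        · rw [hx]; simp
        · have hxV : x ∈ V i := hp i (subset_closure (Function.mem_support.2 hx))
          have h2 := hfV i x hxV
          have h0 : 0 ≤ p i x := p.nonneg i x
          nlinarith
      calc Λ (p i * f) ≤ Λ ((a + ((i:ℕ)+1)*ε + ε) • (p i : C(Ω,ℝ))) := hmono hΛ hpt
        _ = (a + ((i:ℕ)+1)*ε + ε) * Λ (p i) := by rw [Λ.map_smul]; rfl
    have hsump : (∑ i : Fin n, (p i : C(Ω,ℝ))) = 1 := by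
      ext x
      simp only [ContinuousMap.coe_sum, Finset.sum_apply, ContinuousMap.one_apply]
      exact hsum1 x
    have hΛp_sum : ∑ i : Fin n, Λ (p i) = Λ 1 := by rw [← map_sum, hsump]
    have hΛp_nonneg : ∀ i, 0 ≤ Λ (p i) := fun i => hΛ _ (fun x => p.nonneg i x)
    have hΛp_le : ∀ i, Λ (p i) ≤ (μ (V i)).toReal := fun i =>
      Λg_le_measure hΛ (hVo i) (fun x => p.nonneg i x) (fun x => p.le_one i x) (hp i)
    have hμV' : ∀ i, (μ (V i)).toReal ≤ (μ (E i)).toReal + ε/n := by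
      intro i
      have h2 : μ (E i) + ENNReal.ofReal (ε/n) ≠ ⊤ :=
        ENNReal.add_ne_top.2 ⟨measure_ne_top μ _, ENNReal.ofReal_ne_top⟩
      have h3 := ENNReal.toReal_mono h2 (hμV i)
      rwa [ENNReal.toReal_add (measure_ne_top μ _) ENNReal.ofReal_ne_top,
        ENNReal.toReal_ofReal (by positivity)] at h3
    have hμdecomp : (μ univ).toReal = ∑ i : Fin n, (μ (E i)).toReal := by
      have h1 : μ univ = ∑ i : Fin n, μ (E i) := by
        rw [← hEU, measure_iUnion hEd hEm, tsum_fintype]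
      rw [h1, ENNReal.toReal_sum (fun i _ => measure_ne_top μ _)]
    have hidecomp : (∫ x, f x ∂μ) = ∑ i : Fin n, ∫ x in E i, f x ∂μ := by
      calc (∫ x, f x ∂μ) = ∫ x in univ, f x ∂μ := setIntegral_univ.symm
        _ = ∫ x in ⋃ i, E i, f x ∂μ := by rw [hEU]
        _ = ∑' i, ∫ x in E i, f x ∂μ :=
            integral_iUnion hEm hEd (by rw [hEU]; exact (hintf f).integrableOn)
        _ = ∑ i : Fin n, ∫ x in E i, f x ∂μ := tsum_fintype _
    have hEint : ∀ i : Fin n, (a + (i:ℕ)*ε) * (μ (E i)).toReal ≤ ∫ x in E i, f x ∂μ := by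
      intro i
      apply setIntegral_ge_of_const_le_real (hEm i) (measure_ne_top μ _)
      · intro x hx; exact le_of_lt hx.1
      · exact (hintf f).integrableOn
    have main : Λ f ≤ ∑ i : Fin n, (a + ((i:ℕ)+1)*ε + ε) * Λ (p i) := by
      rw [hΛdecomp]; exact Finset.sum_le_sum (fun i _ => step1 i)
    have step2 : ∑ i : Fin n, (a + ((i:ℕ)+1)*ε + ε) * Λ (p i)
        = ∑ i : Fin n, c i * Λ (p i) - (B+1) * Λ 1 := by
      rw [← hΛp_sum, Finset.mul_sum, ← Finset.sum_sub_distrib]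
      exact Finset.sum_congr rfl (fun i _ => by rw [hca i]; ring)
    have step3 : ∑ i : Fin n, c i * Λ (p i) ≤ ∑ i : Fin n, c i * ((μ (E i)).toReal + ε/n) :=
      Finset.sum_le_sum (fun i _ =>
        mul_le_mul_of_nonneg_left ((hΛp_le i).trans (hμV' i)) (hc0 i))
    have step4 : (B+1) * (μ univ).toReal ≤ (B+1) * Λ 1 :=
      mul_le_mul_of_nonneg_left (measure_univ_toReal_le hΛ) (by linarith)
    have step5 : ∑ i : Fin n, c i * ((μ (E i)).toReal + ε/n)
        = ∑ i : Fin n, (a + (i:ℕ)*ε) * (μ (E i)).toReal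
          + (2*ε + (B+1)) * (μ univ).toReal + (∑ i : Fin n, c i) * (ε/n) := by
      have hterm : ∀ i : Fin n, c i * ((μ (E i)).toReal + ε/n)
          = (a + (i:ℕ)*ε) * (μ (E i)).toReal + (2*ε + (B+1)) * (μ (E i)).toReal
            + c i * (ε/n) := by
        intro i; rw [hcdef]; dsimp only; rw [ha]; ring
      rw [Finset.sum_congr rfl (fun i _ => hterm i), Finset.sum_add_distrib,
        Finset.sum_add_distrib, ← Finset.mul_sum, ← Finset.sum_mul, hμdecomp]
    have step6 : (∑ i : Fin n, c i) * (ε/n) ≤ ε*(2*B+4) := by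
      have hci : ∀ i : Fin n, c i ≤ (n:ℝ)*ε + ε := by
        intro i
        have h1 : ((i:ℕ):ℝ) + 1 ≤ (n:ℝ) := by exact_mod_cast i.isLt
        rw [hcdef]; dsimp only; nlinarith
      have h1 : ∑ i : Fin n, c i ≤ (n:ℝ) * ((n:ℝ)*ε + ε) := by
        calc ∑ i : Fin n, c i ≤ ∑ _i : Fin n, ((n:ℝ)*ε + ε) :=
              Finset.sum_le_sum (fun i _ => hci i)
          _ = (n:ℝ) * ((n:ℝ)*ε + ε) := by
              rw [Finset.sum_const, Finset.card_univ, Fintype.card_fin, nsmul_eq_mul]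
      have hnne : (n:ℝ) ≠ 0 := ne_of_gt hn0'
      calc (∑ i : Fin n, c i)*(ε/n) ≤ ((n:ℝ)*((n:ℝ)*ε+ε))*(ε/n) :=
            mul_le_mul_of_nonneg_right h1 (by positivity)
        _ = ((n:ℝ)*ε+ε)*ε := by field_simp
        _ ≤ (2*B+1+2*ε+ε)*ε :=
            mul_le_mul_of_nonneg_right (by linarith) hε.le
        _ = ε*(2*B+1+3*ε) := by ring
        _ ≤ ε*(2*B+4) := mul_le_mul_of_nonneg_left (by linarith) hε.le
    have step7 : ∑ i : Fin n, (a + (i:ℕ)*ε) * (μ (E i)).toReal ≤ ∫ x, f x ∂μ := by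
      rw [hidecomp]; exact Finset.sum_le_sum (fun i _ => hEint i)
    have hμu0 : 0 ≤ (μ univ).toReal := ENNReal.toReal_nonneg
    calc Λ f ≤ ∑ i : Fin n, (a + ((i:ℕ)+1)*ε + ε) * Λ (p i) := main
      _ = ∑ i : Fin n, c i * Λ (p i) - (B+1) * Λ 1 := step2
      _ ≤ ∑ i : Fin n, c i * ((μ (E i)).toReal + ε/n) - (B+1) * (μ univ).toReal := by
          linarith [step3, step4]
      _ = ∑ i : Fin n, (a + (i:ℕ)*ε) * (μ (E i)).toReal + (2*ε + (B+1)) * (μ univ).toReal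
          + (∑ i : Fin n, c i) * (ε/n) - (B+1) * (μ univ).toReal := by rw [step5]
      _ ≤ (∫ x, f x ∂μ) + 2*ε*(μ univ).toReal + ε*(2*B+4) := by
          nlinarith [step6, step7]
      _ = (∫ x, f x ∂μ) + ε * (2*(μ univ).toReal + 2*B + 4) := by ring
  refine le_of_forall_pos_le_add (fun ε' hε' => ?_)
  set C : ℝ := 2*(μ univ).toReal + 2*‖f‖ + 4 with hC
  have hμu0 : 0 ≤ (μ univ).toReal := ENNReal.toReal_nonneg
  have hf0 : 0 ≤ ‖f‖ := norm_nonneg f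
  have hC0 : 0 < C := by rw [hC]; linarith
  have hεc : 0 < min 1 (ε'/C) := lt_min one_pos (by positivity)
  have hkey := key (min 1 (ε'/C)) hεc (min_le_left _ _)
  have h2 : min 1 (ε'/C) * C ≤ ε' := by
    calc min 1 (ε'/C) * C ≤ (ε'/C)*C :=
          mul_le_mul_of_nonneg_right (min_le_right _ _) hC0.le
      _ = ε' := by field_simp
  linarith

end meas


end posΛ

end RMKaux

end RMKaux

open RMKaux in
/-- Riesz–Markov–Kakutani for compact Hausdorff spaces. -/
theorem rmk_compact {Ω : Type*} [TopologicalSpace Ω] [CompactSpace Ω] [T2Space Ω]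
    [MeasurableSpace Ω] [BorelSpace Ω] (Λ : C(Ω, ℝ) →ₗ[ℝ] ℝ)
    (hΛ : ∀ f : C(Ω, ℝ), (∀ x, 0 ≤ f x) → 0 ≤ Λ f) :
    ∃ μ : Measure Ω, μ.Regular ∧ ∀ f : C(Ω, ℝ), Λ f = ∫ ω, f ω ∂μ := by
  refine ⟨(RMKaux.rieszContent hΛ).measure, Content.regular _, fun f => ?_⟩
  have h1 := RMKaux.Λ_le_integral hΛ f
  have h2 := RMKaux.Λ_le_integral hΛ (-f)
  have h3 : Λ (-f) = -Λ f := map_neg Λ f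
  have h4 : (∫ x, (-f) x ∂((RMKaux.rieszContent hΛ).measure))
      = -∫ x, f x ∂((RMKaux.rieszContent hΛ).measure) := by
    simp only [ContinuousMap.coe_neg, Pi.neg_apply]
    exact integral_neg _
  rw [h3, h4] at h2
  have : Λ f = ∫ x, f x ∂((RMKaux.rieszContent hΛ).measure) := le_antisymm h1 (by linarith)
  exact this

/-- representation of positive functionals on an Archimedean pre-Riesz
space (here: a directed Archimedean ordered vector space) with order unit, embedded
bipositively as an order dense, majorizing subspace of `C(Ω)`. -/
theorem stmt_15 (X : Type*) [AddCommGroup X] [Module ℝ X]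
    [PartialOrder X] [CovariantClass X X (· + ·) (· ≤ ·)]
    (hsmul : ∀ (c : ℝ) (x : X), 0 ≤ c → 0 ≤ x → 0 ≤ c • x)
    -- X is directed and Archimedean (hence pre-Riesz)
    (hdir : ∀ x y : X, ∃ z : X, x ≤ z ∧ y ≤ z)
    (harch : ∀ x y : X, (∀ n : ℕ, n • x ≤ y) → x ≤ 0)
    -- X has an order unit
    (hunit : ∃ u : X, ∀ x : X, ∃ n : ℕ, x ≤ n • u)
    (Ω : Type*) [TopologicalSpace Ω] [CompactSpace Ω] [T2Space Ω]
    [MeasurableSpace Ω] [BorelSpace Ω]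
    (i : X →ₗ[ℝ] C(Ω, ℝ))
    -- i is bipositive (in particular injective)
    (hbipos : ∀ x : X, 0 ≤ x ↔ 0 ≤ i x)
    -- i(X) is majorizing in C(Ω)
    (hmaj : ∀ f : C(Ω, ℝ), ∃ x : X, f ≤ i x)
    -- i(X) is order dense in C(Ω)
    (hdense : ∀ f : C(Ω, ℝ), IsGLB {g : C(Ω, ℝ) | ∃ x : X, g = i x ∧ f ≤ i x} f)
    (φ : X →ₗ[ℝ] ℝ) (hφ : ∀ x : X, 0 ≤ x → 0 ≤ φ x) :
    ∃ μ : Measure Ω, μ.Regular ∧ ∀ x : X, φ x = ∫ ω, i x ω ∂μ := by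
  -- injectivity of `i`
  have hinj : Function.Injective i := by
    intro x y hxy
    have h1 : 0 ≤ x - y := (hbipos (x - y)).2 (by rw [map_sub, hxy, sub_self])
    have h2 : 0 ≤ y - x := (hbipos (y - x)).2 (by rw [map_sub, hxy, sub_self])
    exact le_antisymm (sub_nonneg.1 h2) (sub_nonneg.1 h1)
  -- the positive cone in C(Ω, ℝ)
  set s : ConvexCone ℝ C(Ω, ℝ) :=
    { carrier := {f | (0 : C(Ω, ℝ)) ≤ f}
      smul_mem' := by
        intro c hc f hf
        intro x
        have : (0:ℝ) ≤ f x := hf x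
        simpa using mul_nonneg hc.le this
      add_mem' := by
        intro f hf g hg x
        have h1 : (0:ℝ) ≤ f x := hf x
        have h2 : (0:ℝ) ≤ g x := hg x
        simpa using add_nonneg h1 h2 } with hs
  -- the partial functional φ ∘ i⁻¹ on the range of i
  let e : X ≃ₗ[ℝ] LinearMap.range i := LinearEquiv.ofInjective i hinj
  let F : LinearMap.range i →ₗ[ℝ] ℝ := φ.comp (e.symm : LinearMap.range i →ₗ[ℝ] X)
  have hie : ∀ z : LinearMap.range i, i (e.symm z) = (z : C(Ω, ℝ)) := by
    intro z
    have : e (e.symm z) = z := e.apply_symm_apply z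
    have h2 : (e (e.symm z) : C(Ω, ℝ)) = i (e.symm z) := rfl
    rw [← h2, this]
  obtain ⟨Λ, hΛeq, hΛpos⟩ :=
    riesz_extension (s.toPointedCone (by show (0 : C(Ω, ℝ)) ≤ 0; exact le_rfl)) ⟨LinearMap.range i, F⟩
      (by
        rintro ⟨x, hx⟩ hxs
        have h0 : (0 : C(Ω, ℝ)) ≤ i (e.symm ⟨x, hx⟩) := by
          rw [hie ⟨x, hx⟩]; exact hxs
        exact hφ _ ((hbipos _).2 h0))
      (by
        intro g
        obtain ⟨x, hx⟩ := hmaj (-g)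
        refine ⟨⟨i x, LinearMap.mem_range_self i x⟩, ?_⟩
        intro ω
        have h2 : -(g ω) ≤ i x ω := hx ω
        show (0 : ℝ) ≤ i x ω + g ω
        linarith)
  obtain ⟨μ, hreg, hint⟩ := rmk_compact Λ (fun f hf => hΛpos f (fun x => hf x))
  refine ⟨μ, hreg, fun x => ?_⟩
  have h1 : Λ (i x) = F ⟨i x, LinearMap.mem_range_self i x⟩ := by
    exact hΛeq ⟨i x, LinearMap.mem_range_self i x⟩
  have h2 : F ⟨i x, LinearMap.mem_range_self i x⟩ = φ x := by
    have : e.symm ⟨i x, LinearMap.mem_range_self i x⟩ = x := by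
      apply hinj
      rw [hie]
    simp only [F, LinearMap.comp_apply, LinearEquiv.coe_coe, this]
  rw [← h2, ← h1, hint (i x)]
end

section
/- Let X = C¹[0,1] with the pointwise order, viewed as an order dense subspace of C[0,1], and let A be a linear operator with domain D(A) ⊆ X mapping into X. Then A has the positive off-diagonal property (⟨Ax, φ⟩ ≥ 0 whenever 0 ≤ x ∈ D(A), 0 ≤ φ ∈ X', ⟨x, φ⟩ = 0, where positive functionals φ are represented by regular Borel measures on [0,1]) if and only if (Ax)(t) ≥ 0 whenever 0 ≤ x ∈ D(A), t ∈ [0,1], and x(t) = 0. -/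
open Set MeasureTheory

/-- for a linear operator on `C¹[0,1]`, the positive off-diagonal
property (with positive functionals represented by regular Borel measures on `[0,1]`)
is equivalent to the pointwise condition: `(Ax)(t) ≥ 0` whenever `0 ≤ x ∈ D(A)` and
`x(t) = 0`. -/
theorem stmt_17 (D : Set (ℝ → ℝ)) (hD : ∀ x ∈ D, ContDiffOn ℝ 1 x (Icc 0 1))
    (A : (ℝ → ℝ) → ℝ → ℝ) (hA : ∀ x ∈ D, ContDiffOn ℝ 1 (A x) (Icc 0 1))
    (hAlin : ∀ x ∈ D, ∀ y ∈ D, ∀ a b : ℝ,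
      (fun t => a * x t + b * y t) ∈ D →
      ∀ t ∈ Icc (0 : ℝ) 1, A (fun s => a * x s + b * y s) t = a * A x t + b * A y t) :
    -- positive off-diagonal property, functionals given by regular Borel measures
    (∀ x ∈ D, (∀ t ∈ Icc (0 : ℝ) 1, 0 ≤ x t) →
      ∀ μ : Measure ↥(Icc (0 : ℝ) 1), μ.Regular →
        (∫ t : ↥(Icc (0 : ℝ) 1), x t ∂μ) = 0 →
        0 ≤ ∫ t : ↥(Icc (0 : ℝ) 1), A x t ∂μ)
    ↔
    -- pointwise condition via point evaluations
    (∀ x ∈ D, (∀ t ∈ Icc (0 : ℝ) 1, 0 ≤ x t) →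
      ∀ t ∈ Icc (0 : ℝ) 1, x t = 0 → 0 ≤ A x t) := by
  constructor
  · intro h x hx hpos t ht hxt
    have hd : (∫ s : ↥(Icc (0:ℝ) 1), x s ∂(Measure.dirac ⟨t, ht⟩)) = 0 := by
      rw [integral_dirac]; exact hxt
    have := h x hx hpos (Measure.dirac ⟨t, ht⟩) inferInstance hd
    rwa [integral_dirac] at this
  · intro h x hx hpos μ hμ hint
    have : IsFiniteMeasure μ := ⟨isCompact_univ.measure_lt_top⟩
    have hcx : Continuous (fun s : ↥(Icc (0:ℝ) 1) => x s) :=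
      ((hD x hx).continuousOn).restrict
    have hix : Integrable (fun s : ↥(Icc (0:ℝ) 1) => x s) μ :=
      hcx.integrable_of_hasCompactSupport (HasCompactSupport.of_compactSpace _)
    have hae : (fun s : ↥(Icc (0:ℝ) 1) => x s) =ᵐ[μ] 0 :=
      (integral_eq_zero_iff_of_nonneg (f := fun s : ↥(Icc (0:ℝ) 1) => x s)
        (fun s => hpos s s.2) hix).mp hint
    apply integral_nonneg_of_ae
    filter_upwards [hae] with s hs
    exact h x hx hpos s s.2 hs
end
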